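/- The proponent has a grounded winning strategy in the dispute tree T induced by argument a if and only if in the interpreted system IS_T there exists a strategy f for agent Pro such that every play consistent with f eventually reaches a state from which, along all continuations, some atom Pro_i (for i ∈ Args) holds forever (i.e., IS_T satisfies the ATL formula ⟨⟨Pro⟩⟩ F (⋁_{i∈Args} AG Pro_i)). -/
import Mathlib


/-- Whose turn it is to put forward an argument. -/
inductive Turn where
  | Pro : Turn
  | Opp : Turn
deriving DecidableEq

/-- Actions of the agents: one attack action per attack of the framework, plus the
action `nothing`. -/
inductive ISAction (α : Type*) where
  | attack (x y : α) : ISAction α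
  | nothing : ISAction α

/-- A global state of the interpreted system `IS_T`: the local states of `Pro`
(its last played argument), of `Opp` (its last played argument, or `none` for
`empty`), and of the environment (whose turn it is, the last played argument of the
dispute, and the attacks seen so far). -/
structure GState (α : Type*) where
  lpro : α
  lopp : Option α
  turn : Turn
  last : α
  seen : Set (α × α)

/-- The initial global state `(a, empty, (Opp, a, ∅))` of `IS_T`. -/
def initState {α : Type*} (a : α) : GState α :=
  ⟨a, none, Turn.Opp, a, ∅⟩

/-- The protocol of player `me` at global state `g`: if it is `me`'s turn and the
last played argument is attacked, the enabled actions are the attacks against the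
last played argument; otherwise the only enabled action is `nothing`. -/
def enabled {α : Type*} (att : α → α → Prop) (me : Turn) (g : GState α) :
    Set (ISAction α) :=
  {act | (g.turn = me ∧ ∃ x, att x g.last ∧ act = ISAction.attack x g.last) ∨
         ((g.turn ≠ me ∨ ¬ ∃ x, att x g.last) ∧ act = ISAction.nothing)}

/-- The global transition relation of `IS_T`: the player whose turn it is plays an
attacker `x` of the last played argument; its local state becomes `x`, and the
environment records the other player's turn, the new last argument `x`, and the new
attack seen. -/
inductive ISTrans {α : Type*} (att : α → α → Prop) : GState α → GState α → Prop
  | pro {g : GState α} {x : α} : g.turn = Turn.Pro → att x g.last →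
      ISTrans att g ⟨x, g.lopp, Turn.Opp, x, insert (x, g.last) g.seen⟩
  | opp {g : GState α} {x : α} : g.turn = Turn.Opp → att x g.last →
      ISTrans att g ⟨g.lpro, some x, Turn.Pro, x, insert (x, g.last) g.seen⟩

/-- A global state is reachable if it can be obtained from the initial state by a
finite sequence of transitions. -/
def Reachable {α : Type*} (att : α → α → Prop) (a : α) (g : GState α) : Prop :=
  Relation.ReflTransGen (ISTrans att) (initState a) g

/-- The arguments played by the proponent in the subtree `T_σ` of the dispute tree
induced by `a`, for a proponent strategy `σ` mapping arguments to attackers. -/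
inductive proPlayed {α : Type*} (att : α → α → Prop) (σ : α → Option α) (a : α) : α → Prop
  | root : proPlayed att σ a a
  | step {p b c : α} : proPlayed att σ a p → att b p → σ b = some c → proPlayed att σ a c

/-- The arguments played by the opponent in `T_σ`. -/
def oppPlayed {α : Type*} (att : α → α → Prop) (σ : α → Option α) (a : α) (b : α) : Prop :=
  ∃ p, proPlayed att σ a p ∧ att b p

/-- `σ` is a grounded winning strategy in the dispute tree induced by `a`: every
opponent node of `T_σ` has exactly one child, and every branch of `T_σ` is finite. -/
def groundedWinning {α : Type*} (att : α → α → Prop) (σ : α → Option α) (a : α) : Prop :=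
  (∀ b, oppPlayed att σ a b → ∃ c, σ b = some c) ∧
  ¬ ∃ g : ℕ → α, g 0 = a ∧ ∀ n, ∃ b, att b (g n) ∧ σ b = some (g (n + 1))

/-- One step of `IS_T` when `Pro` follows the strategy `f` (a function of the
observable state, choosing the argument `Pro` plays next): on `Pro`'s turn the
played attacker is the one chosen by `f`, on `Opp`'s turn any attacker may be
played, and when the last played argument is unattacked the state stutters (both
agents perform `nothing`). -/
inductive StratStep {α : Type*} (att : α → α → Prop) (f : GState α → α) :
    GState α → GState α → Prop
  | pro {g : GState α} : g.turn = Turn.Pro → att (f g) g.last →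
      StratStep att f g ⟨f g, g.lopp, Turn.Opp, f g, insert (f g, g.last) g.seen⟩
  | opp {g : GState α} {x : α} : g.turn = Turn.Opp → att x g.last →
      StratStep att f g ⟨g.lpro, some x, Turn.Pro, x, insert (x, g.last) g.seen⟩
  | stay {g : GState α} : (¬ ∃ x, att x g.last) → StratStep att f g g

/-- A play of `IS_T` consistent with `Pro`'s strategy `f`: an infinite sequence of
global states starting at the initial state, each step following `StratStep`. -/
def Play {α : Type*} (att : α → α → Prop) (f : GState α → α) (a : α)
    (π : ℕ → GState α) : Prop :=
  π 0 = initState a ∧ ∀ n, StratStep att f (π n) (π (n + 1))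

/-- One step of `IS_T` with no constraint on the agents' strategies (used to
interpret the path quantifier `A`): either a transition, or a stutter when the last
played argument is unattacked. -/
inductive FullStep {α : Type*} (att : α → α → Prop) : GState α → GState α → Prop
  | trans {g g' : GState α} : ISTrans att g g' → FullStep att g g'
  | stay {g : GState α} : (¬ ∃ x, att x g.last) → FullStep att g g

/-- The atom `Pro_i` holds at a global state `g` iff `Pro`'s local state is `i` and
the environment records `(Opp, i, _)`. -/
def proAtom {α : Type*} (i : α) (g : GState α) : Prop :=
  g.lpro = i ∧ g.turn = Turn.Opp ∧ g.last = i

/-- `AG Pro_i` holds at `g`: along every path from `g`, the atom `Pro_i` holds at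
every state. -/
def AGproAtom {α : Type*} (att : α → α → Prop) (i : α) (g : GState α) : Prop :=
  ∀ ρ : ℕ → GState α, ρ 0 = g → (∀ n, FullStep att (ρ n) (ρ (n + 1))) →
    ∀ n, proAtom i (ρ n)


section Aux

variable {α : Type*}

/-- `p` can be defended within `n` rounds. -/
def winN (att : α → α → Prop) : ℕ → α → Prop
  | 0, _ => False
  | n+1, p => ∀ b, att b p → ∃ c, att c b ∧ winN att n c

lemma winN_mono (att : α → α → Prop) : ∀ {m n : ℕ}, m ≤ n → ∀ {p}, winN att m p → winN att n p := by
  intro m n h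
  induction n generalizing m with
  | zero => intro p hp; interval_cases m; exact hp.elim
  | succ n ih =>
    intro p hp
    match m, hp with
    | 0, hp => exact hp.elim
    | m+1, hp =>
      intro b hb
      obtain ⟨c, hc, hw⟩ := hp b hb
      exact ⟨c, hc, ih (Nat.le_of_succ_le_succ h) hw⟩

/-- `p` is a hereditarily (well-foundedly) defended argument. -/
def Gw (att : α → α → Prop) (p : α) : Prop := ∃ n, winN att n p

lemma gw_unattacked {att : α → α → Prop} {p : α} (h : ¬ ∃ b, att b p) : Gw att p :=
  ⟨1, fun b hb => absurd ⟨b, hb⟩ h⟩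

lemma gw_of_forall [Finite α] {att : α → α → Prop} {p : α}
    (h : ∀ b, att b p → ∃ c, att c b ∧ Gw att c) : Gw att p := by
  classical
  have h' : ∀ b : α, ∃ m, att b p → ∃ c, att c b ∧ winN att m c := by
    intro b
    by_cases hb : att b p
    · obtain ⟨c, hc, n, hn⟩ := h b hb
      exact ⟨n, fun _ => ⟨c, hc, hn⟩⟩
    · exact ⟨0, fun hh => absurd hh hb⟩
  choose m hm using h'
  have : Fintype α := Fintype.ofFinite α
  refine ⟨Finset.univ.sup m + 1, fun b hb => ?_⟩
  obtain ⟨c, hc, hw⟩ := hm b hb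
  exact ⟨c, hc, winN_mono att (Finset.le_sup (Finset.mem_univ b)) hw⟩

lemma not_gw [Finite α] {att : α → α → Prop} {p : α} (h : ¬ Gw att p) :
    ∃ b, att b p ∧ ∀ c, att c b → ¬ Gw att c := by
  by_contra hc
  push_neg at hc
  exact h (gw_of_forall fun b hb => by
    obtain ⟨c, h1, h2⟩ := hc b hb
    exact ⟨c, h1, h2⟩)

/-- rank of an argument -/
noncomputable def rk (att : α → α → Prop) (p : α) : ℕ := sInf {n | winN att n p}

lemma rk_winN {att : α → α → Prop} {p : α} (h : Gw att p) : winN att (rk att p) p :=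
  Nat.sInf_mem h

open Classical in
noncomputable def sigmaF (att : α → α → Prop) (b : α) : Option α :=
  if h : ({n | ∃ c, att c b ∧ winN att n c}).Nonempty then
    some (Nat.sInf_mem h).choose
  else none

open Classical in
lemma sigmaF_spec {att : α → α → Prop} {b c : α} (h : sigmaF att b = some c) :
    att c b ∧ winN att (sInf {n | ∃ c, att c b ∧ winN att n c}) c := by
  unfold sigmaF at h
  split at h
  · next hne =>
    obtain rfl : (Nat.sInf_mem hne).choose = c := by injection h
    exact (Nat.sInf_mem hne).choose_spec
  · exact absurd h (by simp)

open Classical in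
lemma sigmaF_some {att : α → α → Prop} {b : α} (h : ∃ c, att c b ∧ Gw att c) :
    ∃ c, sigmaF att b = some c := by
  obtain ⟨c, hc, n, hn⟩ := h
  rw [sigmaF, dif_pos ⟨n, c, hc, hn⟩]
  exact ⟨_, rfl⟩

lemma sigmaF_lt {att : α → α → Prop} {p b c : α} (hp : Gw att p) (hb : att b p)
    (hc : sigmaF att b = some c) : Gw att c ∧ rk att c < rk att p := by
  have hw := rk_winN hp
  obtain ⟨hatt, hwc⟩ := sigmaF_spec hc
  refine ⟨⟨_, hwc⟩, ?_⟩
  cases hrk : rk att p with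
  | zero => rw [hrk] at hw; exact hw.elim
  | succ m =>
    rw [hrk] at hw
    obtain ⟨d, hd, hwd⟩ := hw b hb
    have h1 : sInf {n | ∃ c, att c b ∧ winN att n c} ≤ m := Nat.sInf_le ⟨d, hd, hwd⟩
    have h2 : rk att c ≤ sInf {n | ∃ c, att c b ∧ winN att n c} := Nat.sInf_le hwc
    omega


end Aux
section Game
variable {α : Type*}

lemma fullStep_of_strat {att : α → α → Prop} {f : GState α → α} {g g' : GState α}
    (h : StratStep att f g g') : FullStep att g g' := by
  cases h with
  | pro h1 h2 => exact .trans (.pro h1 h2)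
  | opp h1 h2 => exact .trans (.opp h1 h2)
  | stay h => exact .stay h

open Classical in
noncomputable def fstep (att : α → α → Prop) (g : GState α) : GState α :=
  if h : ∃ x, att x g.last then
    if g.turn = Turn.Pro then ⟨h.choose, g.lopp, Turn.Opp, h.choose, insert (h.choose, g.last) g.seen⟩
    else ⟨g.lpro, some h.choose, Turn.Pro, h.choose, insert (h.choose, g.last) g.seen⟩
  else g

open Classical in
lemma fullStep_fstep (att : α → α → Prop) (g : GState α) : FullStep att g (fstep att g) := by
  unfold fstep
  split
  · next h =>
    split
    · next ht => exact .trans (.pro ht h.choose_spec)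
    · next ht =>
      have ho : g.turn = Turn.Opp := by cases hg : g.turn <;> simp_all
      exact .trans (.opp ho h.choose_spec)
  · next h => exact .stay h

lemma iSTrans_att {att : α → α → Prop} {g g' : GState α} (h : ISTrans att g g') :
    ∃ x, att x g.last := by
  cases h with
  | pro h1 h2 => exact ⟨_, h2⟩
  | opp h1 h2 => exact ⟨_, h2⟩

lemma AG_iff (att : α → α → Prop) (i : α) (g : GState α) :
    AGproAtom att i g ↔ (proAtom i g ∧ ¬ ∃ x, att x i) := by
  constructor
  · intro h
    have hpa : proAtom i g := by
      refine h (fun n => (fstep att)^[n] g) rfl (fun n => ?_) 0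
      show FullStep att ((fstep att)^[n] g) ((fstep att)^[n+1] g)
      rw [Function.iterate_succ_apply']
      exact fullStep_fstep att _
    refine ⟨hpa, ?_⟩
    rintro ⟨x, hx⟩
    obtain ⟨hl, ht, hlast⟩ := hpa
    have hx' : att x g.last := by rw [hlast]; exact hx
    have h1 := h (fun n => match n with
        | 0 => g
        | n+1 => (fstep att)^[n] ⟨g.lpro, some x, Turn.Pro, x, insert (x, g.last) g.seen⟩)
      rfl (fun n => by
        match n with
        | 0 => exact .trans (.opp ht hx')
        | n+1 =>
          show FullStep att ((fstep att)^[n] _) ((fstep att)^[n+1] _)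
          rw [Function.iterate_succ_apply']
          exact fullStep_fstep att _) 1
    exact absurd h1.2.1 (by simp)
  · rintro ⟨⟨hl, ht, hlast⟩, hun⟩ ρ h0 hs n
    have key : ∀ n, ρ n = g := by
      intro n
      induction n with
      | zero => exact h0
      | succ n ih =>
        have hstep := hs n
        rw [ih] at hstep
        cases hstep with
        | trans h =>
          obtain ⟨x, hx⟩ := iSTrans_att h
          exact absurd ⟨x, (hlast ▸ hx : att x i)⟩ hun
        | stay h => rfl
    rw [key n]
    exact ⟨hl, ht, hlast⟩

end Game
section Main
variable {α : Type*}

lemma proPlayed_gw [Finite α] {att : α → α → Prop} {a : α} (ha : Gw att a) :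
    ∀ p, proPlayed att (sigmaF att) a p → Gw att p := by
  intro p hp
  induction hp with
  | root => exact ha
  | step hp hb hσ ih => exact ⟨_, (sigmaF_spec hσ).2⟩

lemma gw_to_LHS [Finite α] (att : α → α → Prop) (a : α) (h : Gw att a) :
    ∃ σ : α → Option α, (∀ x y, σ x = some y → att y x) ∧ groundedWinning att σ a := by
  refine ⟨sigmaF att, fun x y hxy => (sigmaF_spec hxy).1, ?_, ?_⟩
  · rintro b ⟨p, hp, hbp⟩
    have hgp := proPlayed_gw h p hp
    have hw := rk_winN hgp
    cases hrk : rk att p with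
    | zero => rw [hrk] at hw; exact hw.elim
    | succ m =>
      rw [hrk] at hw
      obtain ⟨c, hc, hwc⟩ := hw b hbp
      exact sigmaF_some ⟨c, hc, _, hwc⟩
  · rintro ⟨g, hg0, hgs⟩
    have hgw : ∀ n, Gw att (g n) := by
      intro n
      induction n with
      | zero => rw [hg0]; exact h
      | succ n ih =>
        obtain ⟨b, hb, hσ⟩ := hgs n
        exact (sigmaF_lt ih hb hσ).1
    have hdesc : ∀ n, rk att (g (n+1)) < rk att (g n) := by
      intro n
      obtain ⟨b, hb, hσ⟩ := hgs n
      exact (sigmaF_lt (hgw n) hb hσ).2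
    have hbound : ∀ n, rk att (g n) + n ≤ rk att (g 0) := by
      intro n
      induction n with
      | zero => omega
      | succ n ih => have := hdesc n; omega
    have := hbound (rk att (g 0) + 1)
    omega

lemma LHS_to_gw [Finite α] (att : α → α → Prop) (a : α) (σ : α → Option α)
    (hatt : ∀ x y, σ x = some y → att y x) (h : groundedWinning att σ a) : Gw att a := by
  classical
  by_contra hga
  have hstep : ∀ p : {p // proPlayed att σ a p ∧ ¬ Gw att p},
      ∃ q : {p // proPlayed att σ a p ∧ ¬ Gw att p}, ∃ b, att b p.1 ∧ σ b = some q.1 := by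
    rintro ⟨p, hp, hgp⟩
    obtain ⟨b, hb, hdef⟩ := not_gw hgp
    obtain ⟨c, hc⟩ := h.1 b ⟨p, hp, hb⟩
    exact ⟨⟨c, .step hp hb hc, hdef c (hatt b c hc)⟩, b, hb, hc⟩
  choose F b hb hσ using hstep
  apply h.2
  refine ⟨fun n => (F^[n] ⟨a, .root, hga⟩).1, rfl, fun n => ?_⟩
  have he : F^[n+1] ⟨a, .root, hga⟩ = F (F^[n] ⟨a, .root, hga⟩) :=
    Function.iterate_succ_apply' F n _
  show ∃ x, att x (F^[n] ⟨a, .root, hga⟩).1 ∧ σ x = some (F^[n+1] ⟨a, .root, hga⟩).1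
  rw [he]
  exact ⟨b _, hb _, hσ _⟩

end Main
section Main2
variable {α : Type*}

lemma stratStep_inv {att : α → α → Prop} {f : GState α → α} {g g' : GState α}
    (h : StratStep att f g g') :
    (g.turn = Turn.Pro ∧ att (f g) g.last ∧
      g' = ⟨f g, g.lopp, Turn.Opp, f g, insert (f g, g.last) g.seen⟩) ∨
    (∃ x, g.turn = Turn.Opp ∧ att x g.last ∧
      g' = ⟨g.lpro, some x, Turn.Pro, x, insert (x, g.last) g.seen⟩) ∨
    ((¬ ∃ x, att x g.last) ∧ g' = g) := by
  cases h with
  | pro h1 h2 => exact .inl ⟨h1, h2, rfl⟩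
  | opp h1 h2 => exact .inr (.inl ⟨_, h1, h2, rfl⟩)
  | stay h => exact .inr (.inr ⟨h, rfl⟩)

lemma gw_to_RHS [Finite α] (att : α → α → Prop) (a : α) (h : Gw att a) :
    ∃ f : GState α → α, (∀ g : GState α, (∃ x, att x g.last) → att (f g) g.last) ∧
      ∀ π : ℕ → GState α, Play att f a π → ∃ k, ∃ i : α, AGproAtom att i (π k) := by
  classical
  set f : GState α → α :=
      fun g => (sigmaF att g.last).elim (if hx : ∃ x, att x g.last then hx.choose else a) id
    with hf_def
  have hfval : ∀ (g : GState α) (c : α), sigmaF att g.last = some c → f g = c := by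
    intro g c hc; simp [hf_def, hc]
  refine ⟨f, ?_, ?_⟩
  · intro g hg
    cases hσ : sigmaF att g.last with
    | none => simp only [hf_def, hσ, Option.elim]; rw [dif_pos hg]; exact hg.choose_spec
    | some c => rw [hfval g c hσ]; exact (sigmaF_spec hσ).1
  · rintro π ⟨h0, hs⟩
    have inv : ∀ n, ((π n).turn = Turn.Opp → Gw att ((π n).last) ∧ (π n).lpro = (π n).last) ∧
        ((π n).turn = Turn.Pro → ∃ c, att c ((π n).last) ∧ Gw att c) := by
      intro n
      induction n with
      | zero =>
        rw [h0]
        exact ⟨fun _ => ⟨h, rfl⟩, fun hh => absurd hh (by simp [initState])⟩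
      | succ n ih =>
        rcases stratStep_inv (hs n) with ⟨h1, h2, heq⟩ | ⟨x, h1, h2, heq⟩ | ⟨h1, heq⟩
        · rw [heq]
          refine ⟨fun _ => ⟨?_, rfl⟩, fun hh => absurd hh (by simp)⟩
          obtain ⟨c₀, hsome⟩ := sigmaF_some (ih.2 h1)
          rw [show (⟨f (π n), (π n).lopp, Turn.Opp, f (π n),
            insert (f (π n), (π n).last) (π n).seen⟩ : GState α).last = f (π n) from rfl,
            hfval _ _ hsome]
          exact ⟨_, (sigmaF_spec hsome).2⟩
        · rw [heq]
          refine ⟨fun hh => absurd hh (by simp), fun _ => ?_⟩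
          obtain ⟨n₀, hw⟩ := (ih.1 h1).1
          cases n₀ with
          | zero => exact hw.elim
          | succ m =>
            obtain ⟨c, hc, hwc⟩ := hw x h2
            exact ⟨c, hc, m, hwc⟩
        · rw [heq]; exact ih
    by_contra hcon
    push_neg at hcon
    have hOppAtt : ∀ k, (π k).turn = Turn.Opp → ∃ x, att x ((π k).last) := by
      intro k hk
      by_contra hun
      exact hcon k ((π k).last) ((AG_iff att _ _).mpr ⟨⟨((inv k).1 hk).2, hk, rfl⟩, hun⟩)
    have hstep2 : ∀ n, (π n).turn = Turn.Opp →
        (π (n+2)).turn = Turn.Opp ∧ rk att ((π (n+2)).last) < rk att ((π n).last) := by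
      intro n hn
      have hx := hOppAtt n hn
      rcases stratStep_inv (hs n) with ⟨h1, _, _⟩ | ⟨x, h1, h2, heq1⟩ | ⟨h1, _⟩
      · rw [hn] at h1; exact absurd h1 (by simp)
      · have ht1 : (π (n+1)).turn = Turn.Pro := by rw [heq1]
        have hdef := (inv (n+1)).2 ht1
        rcases stratStep_inv (hs (n+1)) with ⟨g1, g2, heq2⟩ | ⟨y, g1, g2, heq2⟩ | ⟨g1, g2⟩
        · obtain ⟨c₀, hsome⟩ := sigmaF_some hdef
          have hfv : f (π (n+1)) = c₀ := hfval _ _ hsome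
          have hlast1 : (π (n+1)).last = x := by rw [heq1]
          rw [hlast1] at hsome
          have hglast : Gw att ((π n).last) := ((inv n).1 hn).1
          have hlt := sigmaF_lt hglast h2 hsome
          constructor
          · rw [heq2]
          · rw [heq2]
            show rk att (f (π (n+1))) < rk att ((π n).last)
            rw [hfv]
            exact hlt.2
        · rw [ht1] at g1; exact absurd g1 (by simp)
        · obtain ⟨c, hc, _⟩ := hdef
          exact absurd ⟨c, hc⟩ g1
      · exact absurd hx h1
    have hpar : ∀ k, (π (2*k)).turn = Turn.Opp := by
      intro k
      induction k with
      | zero => rw [show 2*0 = 0 from rfl, h0]; rfl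
      | succ k ih =>
        have := (hstep2 (2*k) ih).1
        rw [show 2*(k+1) = 2*k+2 by ring]
        exact this
    have hbound : ∀ k, rk att ((π (2*k)).last) + k ≤ rk att ((π 0).last) := by
      intro k
      induction k with
      | zero => rw [show 2*0 = 0 from rfl]; omega
      | succ k ih =>
        have h2 := (hstep2 (2*k) (hpar k)).2
        rw [show 2*(k+1) = 2*k+2 by ring]
        omega
    have := hbound (rk att ((π 0).last) + 1)
    omega

end Main2
section Main3
variable {α : Type*}

/-- Glue a finite reachable prefix with an infinite tail into a play. -/
lemma glue_play {att : α → α → Prop} {f : GState α → α} {a : α} :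
    ∀ g : GState α, Relation.ReflTransGen (StratStep att f) (initState a) g →
    ∀ ρ : ℕ → GState α, ρ 0 = g → (∀ n, StratStep att f (ρ n) (ρ (n+1))) →
    ∃ π N, Play att f a π ∧ ∀ n, π (N + n) = ρ n := by
  intro g hg
  induction hg with
  | refl =>
    intro ρ h0 hs
    exact ⟨ρ, 0, ⟨h0, hs⟩, fun n => by rw [Nat.zero_add]⟩
  | @tail b c hg' hstep ih =>
    intro ρ h0 hs
    obtain ⟨π, N, hP, hN⟩ := ih (fun n => match n with | 0 => b | n+1 => ρ n) rfl (fun n => by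
      match n with
      | 0 => show StratStep att f b (ρ 0); rw [h0]; exact hstep
      | n+1 => exact hs n)
    refine ⟨π, N + 1, hP, fun n => ?_⟩
    have := hN (n + 1)
    rwa [show N + (n + 1) = N + 1 + n by omega] at this

lemma RHS_to_gw [Finite α] (att : α → α → Prop) (a : α) (f : GState α → α)
    (hf : ∀ g : GState α, (∃ x, att x g.last) → att (f g) g.last)
    (hp : ∀ π : ℕ → GState α, Play att f a π → ∃ k, ∃ i : α, AGproAtom att i (π k)) :
    Gw att a := by
  classical
  by_contra hga
  have keystep : ∀ g : GState α, Relation.ReflTransGen (StratStep att f) (initState a) g →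
      g.turn = Turn.Opp → g.lpro = g.last → ¬ Gw att g.last →
      ∃ g₁ g₂ : GState α, StratStep att f g g₁ ∧ StratStep att f g₁ g₂ ∧
        g₁.turn = Turn.Pro ∧ Relation.ReflTransGen (StratStep att f) (initState a) g₂ ∧
        g₂.turn = Turn.Opp ∧ g₂.lpro = g₂.last ∧ ¬ Gw att g₂.last := by
    intro g hR hturn hlp hngw
    obtain ⟨b, hb, hdef⟩ := not_gw hngw
    have hs1 : StratStep att f g ⟨g.lpro, some b, Turn.Pro, b, insert (b, g.last) g.seen⟩ :=
      .opp hturn hb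
    set g₁ : GState α := ⟨g.lpro, some b, Turn.Pro, b, insert (b, g.last) g.seen⟩ with hg₁
    have hbat : ∃ x, att x b := by
      by_contra hun
      obtain ⟨π, N, hP, hN⟩ := glue_play g₁ (hR.tail hs1) (fun _ => g₁) rfl
        (fun n => .stay (show ¬ ∃ x, att x g₁.last from hun))
      obtain ⟨k, i, hAG⟩ := hp π hP
      have hall := hAG (fun n => π (k + n)) rfl (fun n => by
        show FullStep att (π (k + n)) (π (k + (n + 1)))
        rw [show k + (n + 1) = (k + n) + 1 by omega]
        exact fullStep_of_strat (hP.2 (k + n)))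
      have h1 : proAtom i (π (k + N)) := hall N
      rw [show k + N = N + k by omega, hN k] at h1
      exact absurd h1.2.1 (by simp [hg₁])
    have hatt2 : att (f g₁) g₁.last := hf g₁ hbat
    have hs2 : StratStep att f g₁
        ⟨f g₁, g₁.lopp, Turn.Opp, f g₁, insert (f g₁, g₁.last) g₁.seen⟩ := .pro rfl hatt2
    exact ⟨g₁, _, hs1, hs2, rfl, (hR.tail hs1).tail hs2, rfl, rfl, hdef (f g₁) hatt2⟩
  have hT : ∀ t : {g : GState α // Relation.ReflTransGen (StratStep att f) (initState a) g ∧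
      g.turn = Turn.Opp ∧ g.lpro = g.last ∧ ¬ Gw att g.last},
      ∃ (g₁ : GState α) (t' : {g : GState α //
        Relation.ReflTransGen (StratStep att f) (initState a) g ∧
        g.turn = Turn.Opp ∧ g.lpro = g.last ∧ ¬ Gw att g.last}),
      StratStep att f t.1 g₁ ∧ StratStep att f g₁ t'.1 ∧ g₁.turn = Turn.Pro := by
    rintro ⟨g, hR, h1, h2, h3⟩
    obtain ⟨g₁, g₂, a1, a2, a3, a4, a5, a6, a7⟩ := keystep g hR h1 h2 h3
    exact ⟨g₁, ⟨g₂, a4, a5, a6, a7⟩, a1, a2, a3⟩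
  choose G1 G2 hA hB hC using hT
  have ht0 : Relation.ReflTransGen (StratStep att f) (initState a) (initState a) ∧
      (initState a).turn = Turn.Opp ∧ (initState a).lpro = (initState a).last ∧
      ¬ Gw att (initState a).last := ⟨.refl, rfl, rfl, hga⟩
  set u := fun n => G2^[n] ⟨initState a, ht0⟩ with hu_def
  have hu : ∀ n, u (n+1) = G2 (u n) := fun n => Function.iterate_succ_apply' G2 n _
  set π : ℕ → GState α := fun n => if n % 2 = 0 then (u (n/2)).1 else G1 (u (n/2)) with hπ_def
  have hπe : ∀ k, π (2*k) = (u k).1 := by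
    intro k
    rw [hπ_def]
    simp only
    rw [if_pos (by omega), show 2*k/2 = k by omega]
  have hπo : ∀ k, π (2*k+1) = G1 (u k) := by
    intro k
    rw [hπ_def]
    simp only
    rw [if_neg (by omega), show (2*k+1)/2 = k by omega]
  have hPlay : Play att f a π := by
    constructor
    · rw [show (0:ℕ) = 2*0 from rfl, hπe 0, hu_def]
      rfl
    · intro n
      rcases Nat.even_or_odd n with ⟨k, hk⟩ | ⟨k, hk⟩
      · rw [show n = 2*k by omega, show 2*k+1 = 2*k+1 from rfl, hπe k, hπo k]
        exact hA _
      · rw [show n = 2*k+1 by omega, show 2*k+1+1 = 2*(k+1) by ring, hπo k, hπe (k+1), hu k]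
        exact hB _
  obtain ⟨k, i, hAG⟩ := hp π hPlay
  obtain ⟨⟨hl, ht, hlast⟩, hun⟩ := (AG_iff att i (π k)).mp hAG
  rcases Nat.even_or_odd k with ⟨m, hm⟩ | ⟨m, hm⟩
  · have hπk : π k = (u m).1 := by rw [show k = 2*m by omega, hπe m]
    obtain ⟨b, hb, -⟩ := not_gw (u m).2.2.2.2
    refine hun ⟨b, ?_⟩
    rw [← hlast, hπk]
    exact hb
  · have hπk : π k = G1 (u m) := by rw [show k = 2*m+1 by omega, hπo m]
    rw [hπk] at ht
    rw [hC (u m)] at ht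
    exact absurd ht (by simp)

end Main3

/-- The proponent has a grounded winning strategy in the dispute tree `T` induced by
`a` iff `IS_T ⊨ ⟨⟨Pro⟩⟩ F (⋁_{i ∈ Args} AG Pro_i)`: there is a strategy `f` for
`Pro` such that every play consistent with `f` eventually reaches a state at which,
along all continuations, some atom `Pro_i` holds forever. -/
theorem groundedWinning_iff_ATL {α : Type*} [Finite α] (att : α → α → Prop) (a : α) :
    (∃ σ : α → Option α, (∀ x y, σ x = some y → att y x) ∧ groundedWinning att σ a) ↔
    (∃ f : GState α → α, (∀ g : GState α, (∃ x, att x g.last) → att (f g) g.last) ∧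
      ∀ π : ℕ → GState α, Play att f a π →
        ∃ k, ∃ i : α, AGproAtom att i (π k)) := by
  constructor
  · rintro ⟨σ, hσ, hgw⟩
    exact gw_to_RHS att a (LHS_to_gw att a σ hσ hgw)
  · rintro ⟨f, hf, hp⟩
    exact gw_to_LHS att a (RHS_to_gw att a f hf hp)
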